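/- For fixed t > 0 and K > 0, the concentration profile C(η) = (1/2)[exp(2η√(Sc K t))erfc(η√Sc + √(Kt)) + exp(−2η√(Sc K t))erfc(η√Sc − √(Kt))] is, for each fixed η > 0, strictly decreasing in Sc on (0, ∞). -/

import Mathlib

open Real Filter

noncomputable def erfc (x : ℝ) : ℝ :=
  (2 / Real.sqrt Real.pi) * ∫ s in Set.Ioi x, Real.exp (-s ^ 2)

/-!
Write `p = √(K t)`, `m = η √Sc` and `erfcx x = exp (x²) erfc x`. The profile is
`F m = exp (-(m² + p²)) / 2 * (erfcx (m + p) + erfcx (m - p))`, and since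
`erfcx' x = 2 x erfcx x - 2 / √π`,
`F' m = exp (-(m² + p²)) * (p * (erfcx (m + p) - erfcx (m - p)) - 2 / √π)`.
The Mills-ratio bound `x ∫ₓ^∞ exp (-s²) ds ≤ exp (-x²) / 2` makes `erfcx` antitone, so `F' < 0`.
-/

open MeasureTheory Set

theorem hasDerivAt_integral_Ioi {E : Type*} [NormedAddCommGroup E] [NormedSpace ℝ E]
    [CompleteSpace E] {f : ℝ → E} (hf : Continuous f) (hint : Integrable f) (x : ℝ) :
    HasDerivAt (fun y => ∫ s in Ioi y, f s) (-f x) x := by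
  have hsplit :
      (fun y => ∫ s in Ioi y, f s) = fun y => (∫ s in Ioi 0, f s) - ∫ s in 0..y, f s := by
    funext y
    rw [← intervalIntegral.integral_Ioi_sub_Ioi' hint.integrableOn hint.integrableOn,
      sub_sub_cancel]
  rw [hsplit]
  exact (hf.integral_hasStrictDerivAt 0 x).hasDerivAt.const_sub _

theorem integrable_exp_neg_sq : Integrable fun s : ℝ => exp (-s ^ 2) := by
  simpa using integrable_exp_neg_mul_sq one_pos

theorem integrable_mul_exp_neg_sq : Integrable fun s : ℝ => s * exp (-s ^ 2) := by
  simpa using integrable_mul_exp_neg_mul_sq one_pos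

theorem integral_Ioi_mul_exp_neg_sq (x : ℝ) :
    ∫ s in Ioi x, s * exp (-s ^ 2) = exp (-x ^ 2) / 2 := by
  have hderiv :
      ∀ s ∈ Ici x, HasDerivAt (fun u : ℝ => -exp (-u ^ 2) / 2) (s * exp (-s ^ 2)) s := fun s _ =>
    ((hasDerivAt_pow 2 s).fun_neg.exp.fun_neg.div_const 2).congr_deriv (by norm_num; ring)
  have hlim : Tendsto (fun u : ℝ => -exp (-u ^ 2) / 2) atTop (nhds 0) := by
    simpa using (tendsto_exp_atBot.comp
      (tendsto_neg_atTop_atBot.comp (tendsto_pow_atTop two_ne_zero))).neg.div_const 2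
  rw [integral_Ioi_of_hasDerivAt_of_tendsto' hderiv integrable_mul_exp_neg_sq.integrableOn hlim]
  ring

theorem mul_integral_Ioi_exp_neg_sq_le (x : ℝ) :
    x * ∫ s in Ioi x, exp (-s ^ 2) ≤ exp (-x ^ 2) / 2 := by
  rw [← integral_const_mul, ← integral_Ioi_mul_exp_neg_sq x]
  refine setIntegral_mono_on (integrable_exp_neg_sq.const_mul x).integrableOn
    integrable_mul_exp_neg_sq.integrableOn measurableSet_Ioi ?_
  intro s hs
  exact mul_le_mul_of_nonneg_right (le_of_lt hs) (exp_pos _).le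

theorem hasDerivAt_erfc (x : ℝ) : HasDerivAt erfc (-(2 / √π * exp (-x ^ 2))) x := by
  have := (hasDerivAt_integral_Ioi (by fun_prop) integrable_exp_neg_sq x).const_mul (2 / √π)
  rwa [mul_neg] at this

noncomputable def erfcx (x : ℝ) : ℝ := exp (x ^ 2) * erfc x

theorem hasDerivAt_erfcx (x : ℝ) : HasDerivAt erfcx (2 * x * erfcx x - 2 / √π) x := by
  have hexp : HasDerivAt (fun x => exp (x ^ 2)) (exp (x ^ 2) * (2 * x)) x := by
    simpa using (hasDerivAt_pow 2 x).exp
  have hcancel : exp (x ^ 2) * exp (-x ^ 2) = 1 := by rw [← exp_add]; simp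
  refine (hexp.mul (hasDerivAt_erfc x)).congr_deriv ?_
  rw [erfcx]
  linear_combination (-(2 / √π)) * hcancel

theorem two_mul_mul_erfcx_le (x : ℝ) : 2 * x * erfcx x ≤ 2 / √π := by
  have hcancel : exp (x ^ 2) * exp (-x ^ 2) = 1 := by rw [← exp_add]; simp
  have hscaled :
      2 * x * erfcx x = 2 / √π * (2 * exp (x ^ 2) * (x * ∫ s in Ioi x, exp (-s ^ 2))) := by
    rw [erfcx, erfc]; ring
  calc 2 * x * erfcx x ≤ 2 / √π * (2 * exp (x ^ 2) * (exp (-x ^ 2) / 2)) := by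
        rw [hscaled]; gcongr; exact mul_integral_Ioi_exp_neg_sq_le x
    _ = 2 / √π := by linear_combination (2 / √π) * hcancel

theorem antitone_erfcx : Antitone erfcx :=
  antitone_of_hasDerivAt_nonpos hasDerivAt_erfcx fun x => by
    simpa using two_mul_mul_erfcx_le x

theorem strictAnti_erfc_profile {p : ℝ} (hp : 0 < p) :
    StrictAnti fun m : ℝ =>
      (1 / 2) * (exp (2 * m * p) * erfc (m + p) + exp (-(2 * m * p)) * erfc (m - p)) := by
  have hprofile : (fun m : ℝ =>
      (1 / 2) * (exp (2 * m * p) * erfc (m + p) + exp (-(2 * m * p)) * erfc (m - p))) =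
      fun m => (1 / 2) * exp (-(m ^ 2 + p ^ 2)) * (erfcx (m + p) + erfcx (m - p)) := by
    funext m
    have h₁ : exp (2 * m * p) = exp (-(m ^ 2 + p ^ 2)) * exp ((m + p) ^ 2) := by
      rw [← exp_add]; ring_nf
    have h₂ : exp (-(2 * m * p)) = exp (-(m ^ 2 + p ^ 2)) * exp ((m - p) ^ 2) := by
      rw [← exp_add]; ring_nf
    rw [erfcx, erfcx, h₁, h₂]; ring
  rw [hprofile]
  refine strictAnti_of_hasDerivAt_neg
    (f' := fun m => exp (-(m ^ 2 + p ^ 2)) * (p * (erfcx (m + p) - erfcx (m - p)) - 2 / √π))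
    (fun m => ?_) fun m => ?_
  · have hweight : HasDerivAt (fun m => (1 / 2) * exp (-(m ^ 2 + p ^ 2)))
        (-(m * exp (-(m ^ 2 + p ^ 2)))) m :=
      (((hasDerivAt_pow 2 m).add_const (p ^ 2)).fun_neg.exp.const_mul (1 / 2)).congr_deriv
        (by norm_num; ring)
    have hsum := ((hasDerivAt_erfcx (m + p)).comp_add_const m p).fun_add
      ((hasDerivAt_erfcx (m - p)).comp_sub_const m p)
    exact (hweight.mul hsum).congr_deriv (by ring)
  · have hmono := antitone_erfcx (by linarith : m - p ≤ m + p)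
    have hc : 0 < 2 / √π := by positivity
    exact mul_neg_of_pos_of_neg (exp_pos _) (by nlinarith)

theorem stmt_13 (t K η : ℝ) (ht : 0 < t) (hK : 0 < K) (hη : 0 < η) :
    StrictAntiOn (fun Sc : ℝ =>
      (1 / 2) * (Real.exp (2 * η * Real.sqrt (Sc * K * t)) * erfc (η * Real.sqrt Sc + Real.sqrt (K * t))
        + Real.exp (-(2 * η * Real.sqrt (Sc * K * t))) * erfc (η * Real.sqrt Sc - Real.sqrt (K * t))))
      (Set.Ioi 0) := by
  have hKt : 0 < K * t := mul_pos hK ht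
  have hprofile := strictAnti_erfc_profile (sqrt_pos.2 hKt)
  have hscale : StrictMonoOn (fun Sc : ℝ => η * √Sc) (Ioi 0) :=
    fun a ha b _ hab => mul_lt_mul_of_pos_left (sqrt_lt_sqrt (le_of_lt ha) hab) hη
  convert hprofile.comp_strictMonoOn hscale using 1
  funext Sc
  simp only [Function.comp, mul_assoc, sqrt_mul' _ hKt.le]
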